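/- arXiv:1708.04799 — 4 statements merged into one kernel-verified Lean document; each statement's English description precedes it below -/
import Mathlib

section
/- For any two finite sets u, v ⊆ {1,...,d}, if π is a uniformly random permutation of {1,...,d}, then the probability that argmin_{i∈u} π(i) = argmin_{i∈v} π(i) equals |u ∩ v| / |u ∪ v| (assuming u ∪ v is nonempty). -/
open Finset

variable {d : ℕ}

lemma my_min_union {d : ℕ} (s t : Finset (Fin d)) : (s ∪ t).min = s.min ⊓ t.min := by
  convert Finset.min_union (s := s) (t := t) using 2

/-- The element of `s` where `π` attains its minimum. -/
noncomputable def amin (s : Finset (Fin d)) (hs : s.Nonempty) (π : Equiv.Perm (Fin d)) :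
    Fin d :=
  π.symm ((s.image (fun i => π i)).min' (hs.image _))

lemma amin_mem (s : Finset (Fin d)) (hs : s.Nonempty) (π : Equiv.Perm (Fin d)) :
    amin s hs π ∈ s := by
  have h := Finset.min'_mem (s.image (fun i => π i)) (hs.image _)
  rw [Finset.mem_image] at h
  obtain ⟨x, hx, hxe⟩ := h
  rw [amin, ← hxe, Equiv.symm_apply_apply]
  exact hx

lemma apply_amin (s : Finset (Fin d)) (hs : s.Nonempty) (π : Equiv.Perm (Fin d)) :
    π (amin s hs π) = (s.image (fun i => π i)).min' (hs.image _) := by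
  simp [amin]

lemma amin_le (s : Finset (Fin d)) (hs : s.Nonempty) (π : Equiv.Perm (Fin d))
    {b : Fin d} (hb : b ∈ s) : π (amin s hs π) ≤ π b := by
  rw [apply_amin]
  exact Finset.min'_le _ _ (Finset.mem_image_of_mem _ hb)

lemma amin_unique (s : Finset (Fin d)) (hs : s.Nonempty) (π : Equiv.Perm (Fin d))
    {m : Fin d} (hm : m ∈ s) (hle : ∀ b ∈ s, π m ≤ π b) : amin s hs π = m := by
  have h1 := amin_le s hs π hm
  have h2 := hle _ (amin_mem s hs π)
  exact π.injective (le_antisymm h1 h2)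

lemma min_eq_iff_amin_mem (u v : Finset (Fin d)) (huv : (u ∪ v).Nonempty)
    (π : Equiv.Perm (Fin d)) :
    (u.image (fun i => π i)).min = (v.image (fun i => π i)).min ↔
      amin (u ∪ v) huv π ∈ u ∩ v := by
  set m := amin (u ∪ v) huv π with hm
  constructor
  · intro h
    have hmin : ((u ∪ v).image (fun i => π i)).min = (u.image (fun i => π i)).min := by
      rw [Finset.image_union, my_min_union, h, inf_idem]
    have hm' : ((u ∪ v).image (fun i => π i)).min = (π m : WithTop (Fin d)) := by
      rw [← Finset.coe_min' (huv.image _), apply_amin]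
    have hu : π m ∈ u.image (fun i => π i) := Finset.mem_of_min (by rw [← hmin, hm'])
    have hv : π m ∈ v.image (fun i => π i) := Finset.mem_of_min (by rw [← h, ← hmin, hm'])
    rw [Finset.mem_image] at hu hv
    obtain ⟨x, hx, hxe⟩ := hu
    obtain ⟨y, hy, hye⟩ := hv
    rw [Finset.mem_inter]
    exact ⟨(π.injective hxe) ▸ hx, (π.injective hye) ▸ hy⟩
  · intro h
    rw [Finset.mem_inter] at h
    have hu : (u.image (fun i => π i)).min = (π m : WithTop (Fin d)) := by
      rw [← Finset.coe_min' (Finset.Nonempty.image ⟨m, h.1⟩ _)]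
      norm_cast
      refine le_antisymm (Finset.min'_le _ _ (Finset.mem_image_of_mem _ h.1)) ?_
      refine Finset.le_min' _ _ _ fun y hy => ?_
      rw [Finset.mem_image] at hy
      obtain ⟨x, hx, hxe⟩ := hy
      exact hxe ▸ amin_le (u ∪ v) huv π (Finset.mem_union_left _ hx)
    have hv : (v.image (fun i => π i)).min = (π m : WithTop (Fin d)) := by
      rw [← Finset.coe_min' (Finset.Nonempty.image ⟨m, h.2⟩ _)]
      norm_cast
      refine le_antisymm (Finset.min'_le _ _ (Finset.mem_image_of_mem _ h.2)) ?_
      refine Finset.le_min' _ _ _ fun y hy => ?_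
      rw [Finset.mem_image] at hy
      obtain ⟨x, hx, hxe⟩ := hy
      exact hxe ▸ amin_le (u ∪ v) huv π (Finset.mem_union_right _ hx)
    rw [hu, hv]

lemma swap_mem {s : Finset (Fin d)} {a b x : Fin d} (ha : a ∈ s) (hb : b ∈ s) (hx : x ∈ s) :
    Equiv.swap a b x ∈ s := by
  rw [Equiv.swap_apply_def]
  split_ifs <;> assumption

lemma amin_mul_swap (s : Finset (Fin d)) (hs : s.Nonempty) {a b : Fin d}
    (ha : a ∈ s) (hb : b ∈ s) (π : Equiv.Perm (Fin d)) :
    amin s hs (π * Equiv.swap a b) = Equiv.swap a b (amin s hs π) := by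
  apply amin_unique
  · exact swap_mem ha hb (amin_mem s hs π)
  · intro c hc
    simp only [Equiv.Perm.mul_apply, Equiv.swap_apply_self]
    exact amin_le s hs π (swap_mem ha hb hc)

lemma fiber_card_eq (s : Finset (Fin d)) (hs : s.Nonempty) {a b : Fin d}
    (ha : a ∈ s) (hb : b ∈ s) :
    ((Finset.univ : Finset (Equiv.Perm (Fin d))).filter (fun π => amin s hs π = a)).card =
      ((Finset.univ : Finset (Equiv.Perm (Fin d))).filter (fun π => amin s hs π = b)).card := by
  apply Finset.card_nbij' (fun π => π * Equiv.swap a b) (fun π => π * Equiv.swap a b)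
  · intro π hπ
    rw [Finset.mem_coe, Finset.mem_filter] at hπ ⊢
    dsimp only
    refine ⟨Finset.mem_univ _, ?_⟩
    rw [amin_mul_swap s hs ha hb, hπ.2, Equiv.swap_apply_left]
  · intro π hπ
    rw [Finset.mem_coe, Finset.mem_filter] at hπ ⊢
    dsimp only
    refine ⟨Finset.mem_univ _, ?_⟩
    rw [amin_mul_swap s hs ha hb, hπ.2, Equiv.swap_apply_right]
  · intro π _
    dsimp only
    rw [mul_assoc, Equiv.swap_mul_self, mul_one]
  · intro π _
    dsimp only
    rw [mul_assoc, Equiv.swap_mul_self, mul_one]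

/-- For finite sets `u, v ⊆ Fin d` with `u ∪ v` nonempty, the probability over a uniformly
random permutation `π` that the minimizer of `π` over `u` equals the minimizer of `π` over `v`
(equivalently, by injectivity of `π`, that `min (π '' u) = min (π '' v)`) is `|u ∩ v| / |u ∪ v|`. -/
theorem minhash_collision_probability {d : ℕ} (u v : Finset (Fin d))
    (huv : (u ∪ v).Nonempty) :
    (((Finset.univ : Finset (Equiv.Perm (Fin d))).filter
        (fun π : Equiv.Perm (Fin d) =>
          (u.image (fun i => π i)).min = (v.image (fun i => π i)).min)).card : ℚ)
      / ((Finset.univ : Finset (Equiv.Perm (Fin d))).card : ℚ)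
      = ((u ∩ v).card : ℚ) / ((u ∪ v).card : ℚ) := by
  classical
  obtain ⟨a₀, ha₀⟩ := id huv
  set c := ((Finset.univ : Finset (Equiv.Perm (Fin d))).filter
      (fun π => amin (u ∪ v) huv π = a₀)).card with hc
  -- rewrite the filter
  have hfilter : ((Finset.univ : Finset (Equiv.Perm (Fin d))).filter
        (fun π : Equiv.Perm (Fin d) =>
          (u.image (fun i => π i)).min = (v.image (fun i => π i)).min))
      = (Finset.univ : Finset (Equiv.Perm (Fin d))).filter
        (fun π => amin (u ∪ v) huv π ∈ u ∩ v) := by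
    apply Finset.filter_congr
    intro π _
    exact min_eq_iff_amin_mem u v huv π
  have hcount : ∀ t : Finset (Fin d), t ⊆ u ∪ v →
      ((Finset.univ : Finset (Equiv.Perm (Fin d))).filter
        (fun π => amin (u ∪ v) huv π ∈ t)).card = t.card * c := by
    intro t ht
    rw [Finset.card_eq_sum_card_fiberwise
      (s := (Finset.univ : Finset (Equiv.Perm (Fin d))).filter (fun π => amin (u ∪ v) huv π ∈ t))
      (f := fun π => amin (u ∪ v) huv π) (t := t)
      (fun π hπ => (Finset.mem_filter.mp hπ).2)]
    rw [Finset.sum_congr rfl (fun a ha => ?_), Finset.sum_const, smul_eq_mul]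
    rw [Finset.filter_filter]
    rw [show ((Finset.univ : Finset (Equiv.Perm (Fin d))).filter
        (fun π => amin (u ∪ v) huv π ∈ t ∧ amin (u ∪ v) huv π = a))
      = (Finset.univ : Finset (Equiv.Perm (Fin d))).filter
        (fun π => amin (u ∪ v) huv π = a) from
      Finset.filter_congr (fun π _ => ⟨fun h => h.2, fun h => ⟨h ▸ ha, h⟩⟩)]
    exact fiber_card_eq (u ∪ v) huv (ht ha) ha₀
  have htotal : ((Finset.univ : Finset (Equiv.Perm (Fin d))).card)
      = (u ∪ v).card * c := by
    rw [← hcount (u ∪ v) subset_rfl]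
    congr 1
    rw [Finset.filter_true_of_mem (fun π _ => amin_mem (u ∪ v) huv π)]
  have hinter := hcount (u ∩ v) Finset.inter_subset_union
  rw [hfilter, hinter, htotal]
  have hc0 : (c : ℚ) ≠ 0 := by
    have : ((Finset.univ : Finset (Equiv.Perm (Fin d))).card) ≠ 0 :=
      Finset.card_ne_zero_of_mem (Finset.mem_univ 1)
    rw [htotal] at this
    exact_mod_cast fun h => this (by exact_mod_cast mul_eq_zero_of_right _ (by exact_mod_cast h))
  push_cast
  rw [mul_div_mul_right _ _ hc0]
end

section
/- Let u, v ∈ {0,1}^d each have at most ψ ones, compressed via BCS with a uniformly random bucket map b : {1,...,d} → {1,...,N}. For any integer r ≥ 1 and ε ∈ (0,1), the probability that more than εr buckets are corrupted (receive at least two active positions) is at most (2ψ/√N)^{εr}. -/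
open Finset

/-- BCS compression: bucket map `b`, compressed bit `j` is the parity of bits mapped to `j`. -/
def bcs {d N : ℕ} (b : Fin d → Fin N) (u : Fin d → ZMod 2) : Fin N → ZMod 2 :=
  fun j => ∑ i ∈ Finset.univ.filter (fun i => b i = j), u i

/-- Hamming distance between binary vectors. -/
def hamming {m : ℕ} (x y : Fin m → ZMod 2) : ℕ :=
  (Finset.univ.filter (fun i => x i ≠ y i)).card

/-- Number of ones (sparsity) of a binary vector. -/
def ones {m : ℕ} (x : Fin m → ZMod 2) : ℕ :=
  (Finset.univ.filter (fun i => x i = 1)).card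

/-- Inner product of binary vectors. -/
def ip {m : ℕ} (x y : Fin m → ZMod 2) : ℕ :=
  (Finset.univ.filter (fun i => x i = 1 ∧ y i = 1)).card


/-- Counting collisions: if the 2m points are pairwise distinct, the number of bucket
maps making each pair collide is at most N^(d-m). -/
lemma coll_card_le {d N m : ℕ} (x y : Fin m → Fin d)
    (hinj : Function.Injective (Sum.elim x y)) :
    ((Finset.univ : Finset (Fin d → Fin N)).filter
      (fun b => ∀ k, b (x k) = b (y k))).card ≤ N ^ (d - m) := by
  classical
  have hyinj : Function.Injective y := fun k l h => by
    have : (Sum.inr k : Fin m ⊕ Fin m) = Sum.inr l := hinj (a₁ := Sum.inr k) (a₂ := Sum.inr l) h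
    exact Sum.inr.inj this
  set Y : Finset (Fin d) := Finset.image y univ with hY
  have hYcard : Y.card = m := by
    rw [hY, Finset.card_image_of_injective _ hyinj, card_univ, Fintype.card_fin]
  have hxY : ∀ k, x k ∉ Y := by
    intro k hk
    obtain ⟨l, -, hl⟩ := Finset.mem_image.mp hk
    have : (Sum.inr l : Fin m ⊕ Fin m) = Sum.inl k := hinj hl
    simp at this
  have hmain : ((univ : Finset (Fin d → Fin N)).filter (fun b => ∀ k, b (x k) = b (y k))).card
      ≤ (univ : Finset ({i // i ∈ Yᶜ} → Fin N)).card := by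
    apply Finset.card_le_card_of_injOn (fun b i => b i.1) (fun _ _ => mem_univ _)
    intro b1 hb1 b2 hb2 h
    simp only [coe_filter, Set.mem_setOf_eq, mem_univ, true_and] at hb1 hb2
    funext i
    by_cases hi : i ∈ Y
    · obtain ⟨k, -, hk⟩ := Finset.mem_image.mp hi
      have h1 := congrFun h ⟨x k, by simp [Finset.mem_compl, hxY k]⟩
      calc b1 i = b1 (y k) := by rw [hk]
        _ = b1 (x k) := (hb1 k).symm
        _ = b2 (x k) := h1
        _ = b2 (y k) := hb2 k
        _ = b2 i := by rw [hk]
    · exact congrFun h ⟨i, Finset.mem_compl.mpr hi⟩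
  calc _ ≤ _ := hmain
    _ = N ^ (d - m) := by
      rw [Finset.card_univ, Fintype.card_fun, Fintype.card_coe, Finset.card_compl,
        Fintype.card_fin, hYcard, Fintype.card_fin]

/-- Witness extraction: if at least m buckets are corrupted, there are m disjoint colliding
pairs of active positions. -/
lemma exists_witness {d N m : ℕ} (P : Fin d → Prop) [DecidablePred P] (b : Fin d → Fin N)
    (h : m ≤ ((Finset.univ : Finset (Fin N)).filter (fun j =>
        2 ≤ ((Finset.univ : Finset (Fin d)).filter (fun i => P i ∧ b i = j)).card)).card) :
    ∃ x y : Fin m → Fin d, (∀ k, P (x k)) ∧ (∀ k, P (y k)) ∧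
      Function.Injective (Sum.elim x y) ∧ ∀ k, b (x k) = b (y k) := by
  classical
  obtain ⟨C', hsub, hcard⟩ := Finset.exists_subset_card_eq h
  let f : Fin m ≃o { j // j ∈ C' } := C'.orderIsoOfFin hcard
  have hpair : ∀ k : Fin m, ∃ ac : Fin d × Fin d,
      P ac.1 ∧ P ac.2 ∧ ac.1 ≠ ac.2 ∧ b ac.1 = (f k : Fin N) ∧ b ac.2 = (f k : Fin N) := by
    intro k
    have hk : ((f k : Fin N)) ∈ (Finset.univ : Finset (Fin N)).filter (fun j =>
        2 ≤ ((Finset.univ : Finset (Fin d)).filter (fun i => P i ∧ b i = j)).card) :=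
      hsub (f k).2
    rw [mem_filter] at hk
    obtain ⟨a, ha, c, hc, hac⟩ := Finset.one_lt_card.mp hk.2
    simp only [mem_filter, mem_univ, true_and] at ha hc
    exact ⟨(a, c), ha.1, hc.1, hac, ha.2, hc.2⟩
  choose ac h1 h2 hne hb1 hb2 using hpair
  have hginj : Function.Injective fun k : Fin m => (f k : Fin N) :=
    fun k l h => f.injective (Subtype.ext h)
  refine ⟨fun k => (ac k).1, fun k => (ac k).2, fun k => h1 k, fun k => h2 k, ?_,
    fun k => by rw [hb1 k, hb2 k]⟩
  intro s t hst
  rcases s with k | k <;> rcases t with l | l <;>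
    simp only [Sum.elim_inl, Sum.elim_inr] at hst
  · have hbb : b ((ac k).1) = b ((ac l).1) := by rw [hst]
    rw [hb1 k, hb1 l] at hbb
    exact congrArg Sum.inl (hginj hbb)
  · have hbb : b ((ac k).1) = b ((ac l).2) := by rw [hst]
    rw [hb1 k, hb2 l] at hbb
    cases hginj hbb
    exact absurd hst (hne k)
  · have hbb : b ((ac k).2) = b ((ac l).1) := by rw [hst]
    rw [hb2 k, hb1 l] at hbb
    cases hginj hbb
    exact absurd hst.symm (hne k)
  · have hbb : b ((ac k).2) = b ((ac l).2) := by rw [hst]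
    rw [hb2 k, hb2 l] at hbb
    exact congrArg Sum.inr (hginj hbb)

/-- For a uniformly random bucket map, the probability that more than `εr` buckets are
corrupted (receive at least two active positions of `(u,v)`) is at most `(2ψ/√N)^{εr}`. -/
theorem bcs_corrupted_buckets_prob {d : ℕ} (N ψ r : ℕ) (hN : 0 < N) (hr : 1 ≤ r)
    (ε : ℝ) (hε : 0 < ε) (hε1 : ε < 1)
    (u v : Fin d → ZMod 2) (hu : ones u ≤ ψ) (hv : ones v ≤ ψ) :
    (((Finset.univ : Finset (Fin d → Fin N)).filter (fun b =>
        (ε * r : ℝ) < ((Finset.univ.filter (fun j : Fin N =>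
          2 ≤ (Finset.univ.filter
            (fun i : Fin d => (u i = 1 ∨ v i = 1) ∧ b i = j)).card)).card : ℝ))).card : ℝ)
      / (((Finset.univ : Finset (Fin d → Fin N)).card : ℝ))
      ≤ (2 * ψ / Real.sqrt N) ^ (ε * r) := by
  set Bad := (Finset.univ : Finset (Fin d → Fin N)).filter (fun b =>
        (ε * r : ℝ) < ((Finset.univ.filter (fun j : Fin N =>
          2 ≤ (Finset.univ.filter
            (fun i : Fin d => (u i = 1 ∨ v i = 1) ∧ b i = j)).card)).card : ℝ)) with hBad
  classical
  set m : ℕ := ⌊ε * r⌋₊ + 1 with hm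
  have hr0 : (0:ℝ) < r := by exact_mod_cast hr
  have hεr0 : (0:ℝ) < ε * r := mul_pos hε hr0
  have hεrm : ε * r < (m : ℝ) := by
    have := Nat.lt_floor_add_one (ε * r)
    rw [hm]; push_cast; linarith
  set A : Finset (Fin d) := univ.filter (fun i : Fin d => u i = 1 ∨ v i = 1) with hA
  have hAcard : A.card ≤ 2 * ψ := by
    have hsub : A ⊆ (univ.filter fun i => u i = 1) ∪ (univ.filter fun i => v i = 1) := by
      intro i hi
      simp only [hA, mem_filter, mem_union, mem_univ, true_and] at hi ⊢
      exact hi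
    calc A.card ≤ _ := card_le_card hsub
      _ ≤ _ := card_union_le _ _
      _ ≤ ψ + ψ := add_le_add hu hv
      _ = 2 * ψ := (two_mul ψ).symm
  set Coll : (Fin m → Fin d) × (Fin m → Fin d) → Finset (Fin d → Fin N) :=
    fun p => univ.filter (fun b => Function.Injective (Sum.elim p.1 p.2) ∧
      ∀ k, b (p.1 k) = b (p.2 k)) with hColl
  set S : Finset ((Fin m → Fin d) × (Fin m → Fin d)) :=
    (Fintype.piFinset fun _ => A) ×ˢ (Fintype.piFinset fun _ => A) with hS
  have hsubset : Bad ⊆ S.biUnion Coll := by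
    intro b hb
    rw [hBad, mem_filter] at hb
    have hbc : m ≤ ((Finset.univ : Finset (Fin N)).filter (fun j =>
        2 ≤ ((Finset.univ : Finset (Fin d)).filter
          (fun i => (u i = 1 ∨ v i = 1) ∧ b i = j)).card)).card := by
      have h2 := (Nat.floor_lt hεr0.le).mpr hb.2
      omega
    obtain ⟨x, y, hx, hy, hinj, hcoll⟩ :=
      exists_witness (fun i => u i = 1 ∨ v i = 1) b hbc
    rw [mem_biUnion]
    refine ⟨(x, y), ?_, ?_⟩
    · rw [hS, mem_product]
      constructor <;> rw [Fintype.mem_piFinset] <;> intro k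
      · exact mem_filter.mpr ⟨mem_univ _, hx k⟩
      · exact mem_filter.mpr ⟨mem_univ _, hy k⟩
    · simp only [hColl, mem_filter, mem_univ, true_and]
      exact ⟨hinj, hcoll⟩
  have hCollcard : ∀ p ∈ S, (Coll p).card ≤ N ^ (d - m) := by
    intro p _
    by_cases hinj : Function.Injective (Sum.elim p.1 p.2)
    · calc (Coll p).card
          ≤ ((univ : Finset (Fin d → Fin N)).filter
              (fun b => ∀ k, b (p.1 k) = b (p.2 k))).card := by
            apply card_le_card
            intro b hb
            simp only [hColl, mem_filter, mem_univ, true_and] at hb ⊢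
            exact hb.2
        _ ≤ N ^ (d - m) := coll_card_le p.1 p.2 hinj
    · have hempty : Coll p = ∅ := by
        simp only [hColl]
        apply Finset.filter_false_of_mem
        intro b _ hc
        exact hinj hc.1
      simp [hempty]
  have hBadle : Bad.card ≤ ((2*ψ)^m * (2*ψ)^m) * N ^ (d - m) := by
    calc Bad.card ≤ (S.biUnion Coll).card := card_le_card hsubset
      _ ≤ ∑ p ∈ S, (Coll p).card := card_biUnion_le
      _ ≤ ∑ _p ∈ S, N ^ (d-m) := sum_le_sum hCollcard
      _ = S.card * N^(d-m) := by rw [sum_const, smul_eq_mul]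
      _ ≤ ((2*ψ)^m * (2*ψ)^m) * N^(d-m) := by
        apply Nat.mul_le_mul_right
        rw [hS, card_product]
        have h1 : (Fintype.piFinset fun _ : Fin m => A).card = A.card ^ m := by
          rw [Fintype.card_piFinset, prod_const, card_univ, Fintype.card_fin]
        rw [h1]
        exact Nat.mul_le_mul (Nat.pow_le_pow_left hAcard m) (Nat.pow_le_pow_left hAcard m)
  have hDcard : ((univ : Finset (Fin d → Fin N)).card) = N ^ d := by
    rw [card_univ, Fintype.card_fun, Fintype.card_fin, Fintype.card_fin]
  have hNpos : (0:ℝ) < (N:ℝ) := by exact_mod_cast hN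
  have hDpos : (0:ℝ) < ((univ : Finset (Fin d → Fin N)).card : ℝ) := by
    rw [hDcard]; positivity
  set B : ℝ := 2 * (ψ:ℝ) / Real.sqrt N with hB
  have hB0 : 0 ≤ B := by
    rw [hB]; positivity
  rcases le_or_gt 1 B with hB1 | hB1
  · have hle1 : (Bad.card : ℝ) / ((univ : Finset (Fin d → Fin N)).card : ℝ) ≤ 1 := by
      rw [div_le_one hDpos]
      exact_mod_cast card_le_card (hBad ▸ filter_subset _ _)
    exact hle1.trans (Real.one_le_rpow hB1 hεr0.le)
  · rcases Nat.eq_zero_or_pos Bad.card with hBc | hBc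
    · rw [hBc]
      simp only [Nat.cast_zero, zero_div]
      exact Real.rpow_nonneg hB0 _
    · obtain ⟨b, hbmem⟩ := card_pos.mp hBc
      obtain ⟨p, hpS, hpColl⟩ := mem_biUnion.mp (hsubset hbmem)
      have hinjp : Function.Injective (Sum.elim p.1 p.2) := by
        simp only [hColl, mem_filter, mem_univ, true_and] at hpColl
        exact hpColl.1
      have h2m : 2 * m ≤ d := by
        have := Fintype.card_le_of_injective _ hinjp
        simpa [Fintype.card_sum, Fintype.card_fin, two_mul] using this
      have hmd : m ≤ d := by omega
      have hsq : Real.sqrt N ^ (2*m) = (N:ℝ)^m := by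
        rw [pow_mul, Real.sq_sqrt (Nat.cast_nonneg N)]
      have hNd : (N:ℝ)^(d-m) * (N:ℝ)^m = (N:ℝ)^d := by
        rw [← pow_add, Nat.sub_add_cancel hmd]
      have hNne : (N:ℝ) ≠ 0 := hNpos.ne'
      have hsqne : Real.sqrt N ≠ 0 := by positivity
      have hKe : ((((2*ψ)^m * (2*ψ)^m) * N ^ (d-m) : ℕ) : ℝ) / ((N:ℝ)^d) = B ^ (2*m) := by
        have e1 : ((((2*ψ)^m * (2*ψ)^m) * N ^ (d-m) : ℕ) : ℝ)
            = (2*(ψ:ℝ))^(2*m) * (N:ℝ)^(d-m) := by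
          push_cast
          ring
        rw [e1, hB, div_pow, hsq, ← hNd, mul_comm ((N:ℝ)^(d-m)) ((N:ℝ)^m),
          mul_div_mul_right _ _ (pow_ne_zero (d-m) hNne)]
      have h2 : (Bad.card : ℝ) / ((univ : Finset (Fin d → Fin N)).card : ℝ) ≤ B ^ (2*m) := by
        rw [← hKe, hDcard]
        push_cast
        gcongr
        exact_mod_cast hBadle
      have h3 : B ^ (2*m) ≤ B ^ (ε * r) := by
        rcases eq_or_lt_of_le hB0 with hBz | hBpos
        · rw [← hBz, Real.zero_rpow hεr0.ne', zero_pow (by omega : 2*m ≠ 0)]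
        · rw [← Real.rpow_natCast B (2*m)]
          apply Real.rpow_le_rpow_of_exponent_ge hBpos hB1.le
          have hm' : (m:ℝ) = (⌊ε*r⌋₊:ℝ) + 1 := by rw [hm]; push_cast; ring
          have hfl : (0:ℝ) ≤ (⌊ε*r⌋₊:ℝ) := Nat.cast_nonneg _
          push_cast
          linarith
      exact h2.trans h3
end

section
/- Let n ≥ 2, ψ ≥ 1, ε ∈ (0,1), and r a positive integer with εr > 3 log₂ n. If N = 16ψ², then for a set of n binary vectors each with at most ψ ones, compressed via BCS with a uniformly random bucket map into {0,1}^N, the probability that some pair of compressed vectors shares more than εr corrupted buckets is at most 1/n. -/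
open Finset

lemma card_fixed_on (d N : ℕ) (Y : Finset (Fin d)) (j0 : Fin N) :
    (Finset.univ.filter (fun g : Fin d → Fin N => ∀ i ∈ Y, g i = j0)).card = N ^ (d - Y.card) := by
  classical
  have h : Finset.univ.filter (fun g : Fin d → Fin N => ∀ i ∈ Y, g i = j0)
      = Fintype.piFinset (fun i => if i ∈ Y then ({j0} : Finset (Fin N)) else Finset.univ) := by
    ext g
    simp only [Finset.mem_filter, Finset.mem_univ, true_and, Fintype.mem_piFinset]
    constructor
    · intro h i
      by_cases hi : i ∈ Y <;> simp [hi, h i]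
    · intro h i hi
      have := h i
      simpa [hi] using this
  rw [h, Fintype.card_piFinset]
  have : ∀ i : Fin d, (if i ∈ Y then ({j0} : Finset (Fin N)) else Finset.univ).card
      = if i ∈ Y then 1 else N := by
    intro i; by_cases hi : i ∈ Y <;> simp [hi]
  rw [Finset.prod_congr rfl (fun i _ => this i), Finset.prod_ite, Finset.prod_const,
    Finset.prod_const, one_pow, one_mul]
  congr 1
  rw [Finset.filter_not, Finset.card_sdiff_of_subset]
  · simp
  · exact Finset.filter_subset _ _

lemma card_collision_le {d N t : ℕ} (hN : 0 < N) (w : Fin t → Fin d × Fin d)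
    (hinj : Function.Injective (fun m => (w m).2))
    (hne : ∀ m m', (w m).1 ≠ (w m').2) :
    (Finset.univ.filter (fun b : Fin d → Fin N => ∀ m, b (w m).1 = b (w m).2)).card
      ≤ N ^ (d - t) := by
  classical
  obtain ⟨j0⟩ : Nonempty (Fin N) := ⟨⟨0, hN⟩⟩
  set Y : Finset (Fin d) := Finset.univ.image (fun m => (w m).2) with hY
  have hYcard : Y.card = t := by
    rw [hY, Finset.card_image_of_injective _ hinj, Finset.card_univ, Fintype.card_fin]
  have hx1 : ∀ m, (w m).1 ∉ Y := by
    intro m hm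
    rw [hY, Finset.mem_image] at hm
    obtain ⟨m', -, hm'⟩ := hm
    exact hne m m' hm'.symm
  have key : (Finset.univ.filter (fun b : Fin d → Fin N => ∀ m, b (w m).1 = b (w m).2)).card
      ≤ (Finset.univ.filter (fun g : Fin d → Fin N => ∀ i ∈ Y, g i = j0)).card := by
    apply Finset.card_le_card_of_injOn (fun b i => if i ∈ Y then j0 else b i)
    · intro b hb
      simp only [Finset.mem_coe, Finset.mem_filter, Finset.mem_univ, true_and]
      intro i hi; simp [hi]
    · intro b hb b' hb' hbb'
      simp only [Finset.mem_coe, Finset.mem_filter, Finset.mem_univ, true_and] at hb hb'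
      funext i
      by_cases hi : i ∈ Y
      · rw [hY, Finset.mem_image] at hi
        obtain ⟨m, -, hm⟩ := hi
        have h1 : b i = b (w m).1 := by rw [hb m, hm]
        have h2 : b' i = b' (w m).1 := by rw [hb' m, hm]
        have := congrFun hbb' (w m).1
        simp only [hx1 m, if_neg, if_false] at this
        rw [h1, h2, this]
      · have := congrFun hbb' i
        simpa [hi] using this
  calc _ ≤ _ := key
    _ = N ^ (d - Y.card) := card_fixed_on d N Y j0
    _ = N ^ (d - t) := by rw [hYcard]

lemma witness_exists {d N t : ℕ} (P : Fin d → Prop) [DecidablePred P]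
    (b : Fin d → Fin N)
    (hb : t ≤ (Finset.univ.filter (fun j : Fin N =>
        2 ≤ (Finset.univ.filter (fun i : Fin d => P i ∧ b i = j)).card)).card) :
    ∃ w : Fin t → Fin d × Fin d,
      (∀ m, P (w m).1 ∧ P (w m).2) ∧
      Function.Injective (fun m => (w m).2) ∧
      (∀ m m', (w m).1 ≠ (w m').2) ∧
      (∀ m, b (w m).1 = b (w m).2) := by
  classical
  set C := Finset.univ.filter (fun j : Fin N =>
      2 ≤ (Finset.univ.filter (fun i : Fin d => P i ∧ b i = j)).card) with hC
  obtain ⟨C', hC'sub, hC'card⟩ := Finset.exists_subset_card_eq hb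
  have e : Fin t ≃ {j // j ∈ C'} := (C'.equivFinOfCardEq hC'card).symm
  have hex : ∀ j ∈ C', ∃ x y : Fin d,
      (P x ∧ b x = j) ∧ (P y ∧ b y = j) ∧ x ≠ y := by
    intro j hj
    have hj2 : 2 ≤ (Finset.univ.filter (fun i : Fin d => P i ∧ b i = j)).card := by
      have := hC'sub hj
      rw [hC, Finset.mem_filter] at this
      exact this.2
    obtain ⟨x, hx, y, hy, hxy⟩ := Finset.one_lt_card.mp hj2
    rw [Finset.mem_filter] at hx hy
    exact ⟨x, y, hx.2, hy.2, hxy⟩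
  choose x y hx hy hxy using hex
  refine ⟨fun m => (x (e m).1 (e m).2, y (e m).1 (e m).2), ?_, ?_, ?_, ?_⟩
  · intro m
    exact ⟨(hx _ _).1, (hy _ _).1⟩
  · intro m m' hmm'
    simp only at hmm'
    have h1 : b (y (e m).1 (e m).2) = (e m).1 := (hy _ _).2
    have h2 : b (y (e m').1 (e m').2) = (e m').1 := (hy _ _).2
    have : (e m).1 = (e m').1 := by rw [← h1, ← h2, hmm']
    exact e.injective (Subtype.ext this)
  · intro m m' h
    simp only at h
    have h1 : b (x (e m).1 (e m).2) = (e m).1 := (hx _ _).2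
    have h2 : b (y (e m').1 (e m').2) = (e m').1 := (hy _ _).2
    by_cases hmm : m = m'
    · subst hmm
      exact hxy _ _ h
    · have : (e m).1 = (e m').1 := by rw [← h1, ← h2, h]
      exact hmm (e.injective (Subtype.ext this))
  · intro m
    rw [(hx (e m).1 (e m).2).2, (hy (e m).1 (e m).2).2]

lemma pair_bound {d : ℕ} (N ψ t : ℕ) (hN : N = 16 * ψ ^ 2) (hψ : 1 ≤ ψ)
    (P : Fin d → Prop) [DecidablePred P]
    (hS : (Finset.univ.filter P).card ≤ 2 * ψ) :
    4 ^ t * (Finset.univ.filter (fun b : Fin d → Fin N =>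
      t ≤ (Finset.univ.filter (fun j : Fin N =>
        2 ≤ (Finset.univ.filter (fun i : Fin d => P i ∧ b i = j)).card)).card)).card ≤ N ^ d := by
  classical
  have hNpos : 0 < N := by rw [hN]; positivity
  set S := Finset.univ.filter P with hSdef
  set B := Finset.univ.filter (fun b : Fin d → Fin N =>
      t ≤ (Finset.univ.filter (fun j : Fin N =>
        2 ≤ (Finset.univ.filter (fun i : Fin d => P i ∧ b i = j)).card)).card) with hB
  rcases B.eq_empty_or_nonempty with hBe | ⟨b₀, hb₀⟩
  · rw [hBe]
    simp only [Finset.card_empty, Nat.mul_zero]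
    exact Nat.zero_le _
  -- t ≤ d
  have hb₀' : t ≤ (Finset.univ.filter (fun j : Fin N =>
      2 ≤ (Finset.univ.filter (fun i : Fin d => P i ∧ b₀ i = j)).card)).card := by
    have := hb₀; rw [hB, Finset.mem_filter] at this; exact this.2
  obtain ⟨w₀, -, hinj₀, -, -⟩ := witness_exists P b₀ hb₀'
  have htd : t ≤ d := by
    have := Fintype.card_le_of_injective _ hinj₀
    simpa using this
  -- set of witnesses
  set W : Finset (Fin t → Fin d × Fin d) :=
    (Fintype.piFinset (fun _ : Fin t => S ×ˢ S)).filter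
      (fun w => Function.Injective (fun m => (w m).2) ∧ ∀ m m', (w m).1 ≠ (w m').2) with hW
  have hsub : B ⊆ W.biUnion (fun w =>
      Finset.univ.filter (fun b : Fin d → Fin N => ∀ m, b (w m).1 = b (w m).2)) := by
    intro b hb
    rw [hB, Finset.mem_filter] at hb
    obtain ⟨w, hmem, hinj, hne, hcol⟩ := witness_exists P b hb.2
    refine Finset.mem_biUnion.mpr ⟨w, ?_, ?_⟩
    · rw [hW, Finset.mem_filter]
      refine ⟨Fintype.mem_piFinset.mpr fun m => ?_, hinj, hne⟩
      rw [Finset.mem_product]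
      refine ⟨?_, ?_⟩
      · rw [hSdef, Finset.mem_filter]; exact ⟨Finset.mem_univ _, (hmem m).1⟩
      · rw [hSdef, Finset.mem_filter]; exact ⟨Finset.mem_univ _, (hmem m).2⟩
    · rw [Finset.mem_filter]
      exact ⟨Finset.mem_univ _, hcol⟩
  have hBle : B.card ≤ W.card * N ^ (d - t) := by
    calc B.card ≤ _ := Finset.card_le_card hsub
      _ ≤ ∑ w ∈ W, (Finset.univ.filter
          (fun b : Fin d → Fin N => ∀ m, b (w m).1 = b (w m).2)).card :=
        Finset.card_biUnion_le
      _ ≤ ∑ _w ∈ W, N ^ (d - t) := by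
        apply Finset.sum_le_sum
        intro w hw
        rw [hW, Finset.mem_filter] at hw
        exact card_collision_le hNpos w hw.2.1 hw.2.2
      _ = W.card * N ^ (d - t) := by rw [Finset.sum_const, smul_eq_mul]
  have hWle : W.card ≤ (S.card * S.card) ^ t := by
    calc W.card ≤ (Fintype.piFinset (fun _ : Fin t => S ×ˢ S)).card :=
        Finset.card_le_card (Finset.filter_subset _ _)
      _ = ∏ _m : Fin t, (S ×ˢ S).card := Fintype.card_piFinset _
      _ = (S.card * S.card) ^ t := by simp [Finset.card_product]
  calc 4 ^ t * B.card ≤ 4 ^ t * ((S.card * S.card) ^ t * N ^ (d - t)) := by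
        apply Nat.mul_le_mul_left
        exact le_trans hBle (Nat.mul_le_mul_right _ hWle)
    _ ≤ 4 ^ t * ((2 * ψ * (2 * ψ)) ^ t * N ^ (d - t)) := by
        apply Nat.mul_le_mul_left
        apply Nat.mul_le_mul_right
        exact Nat.pow_le_pow_left (Nat.mul_le_mul hS hS) t
    _ = N ^ t * N ^ (d - t) := by
        rw [← Nat.mul_assoc, ← Nat.mul_pow, hN]
        ring_nf
    _ = N ^ d := by rw [← pow_add, Nat.add_sub_cancel' htd]

/-- If `εr > 3 log₂ n` and `N = 16ψ²`, then with probability at least `1 - 1/n` over a uniformly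
random bucket map, no pair of the `n` compressed vectors shares more than `εr` corrupted buckets. -/
theorem bcs_all_pairs_corruption_prob {d : ℕ} (n ψ r N : ℕ) (hn : 2 ≤ n) (hψ : 1 ≤ ψ)
    (ε : ℝ) (hε : 0 < ε) (hε1 : ε < 1) (hr : 1 ≤ r)
    (hεr : 3 * Real.logb 2 n < ε * r) (hN : N = 16 * ψ ^ 2)
    (u : Fin n → Fin d → ZMod 2) (hones : ∀ k, ones (u k) ≤ ψ) :
    (((Finset.univ : Finset (Fin d → Fin N)).filter (fun b =>
        ∃ k l : Fin n, k ≠ l ∧ (ε * r : ℝ) <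
          ((Finset.univ.filter (fun j : Fin N =>
            2 ≤ (Finset.univ.filter
              (fun i : Fin d => (u k i = 1 ∨ u l i = 1) ∧ b i = j)).card)).card : ℝ))).card : ℝ)
      / (((Finset.univ : Finset (Fin d → Fin N)).card : ℝ))
      ≤ 1 / n := by
  classical
  have hNpos : 0 < N := by rw [hN]; positivity
  have hrpos : (0:ℝ) < (r:ℝ) := by exact_mod_cast hr
  have hεr0 : (0:ℝ) ≤ ε * r := le_of_lt (mul_pos hε hrpos)
  set t := Nat.floor (ε * r) + 1 with ht
  set Bad := ((Finset.univ : Finset (Fin d → Fin N)).filter (fun b =>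
        ∃ k l : Fin n, k ≠ l ∧ (ε * r : ℝ) <
          ((Finset.univ.filter (fun j : Fin N =>
            2 ≤ (Finset.univ.filter
              (fun i : Fin d => (u k i = 1 ∨ u l i = 1) ∧ b i = j)).card)).card : ℝ))) with hBad
  -- Bad is covered by the union over pairs
  have hsub : Bad ⊆ (Finset.univ : Finset (Fin n × Fin n)).biUnion (fun p =>
      Finset.univ.filter (fun b : Fin d → Fin N =>
        t ≤ (Finset.univ.filter (fun j : Fin N =>
          2 ≤ (Finset.univ.filter
            (fun i : Fin d => (u p.1 i = 1 ∨ u p.2 i = 1) ∧ b i = j)).card)).card)) := by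
    intro b hb
    rw [hBad, Finset.mem_filter] at hb
    obtain ⟨-, k, l, hkl, hlt⟩ := hb
    refine Finset.mem_biUnion.mpr ⟨(k, l), Finset.mem_univ _, ?_⟩
    rw [Finset.mem_filter]
    refine ⟨Finset.mem_univ _, ?_⟩
    have hfl : Nat.floor (ε * r) < (Finset.univ.filter (fun j : Fin N =>
          2 ≤ (Finset.univ.filter
            (fun i : Fin d => (u k i = 1 ∨ u l i = 1) ∧ b i = j)).card)).card :=
      (Nat.floor_lt hεr0).mpr (by exact_mod_cast hlt)
    exact Nat.succ_le_of_lt hfl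
  -- per-pair sparsity bound
  have hcardS : ∀ k l : Fin n,
      (Finset.univ.filter (fun i : Fin d => u k i = 1 ∨ u l i = 1)).card ≤ 2 * ψ := by
    intro k l
    rw [Finset.filter_or]
    calc _ ≤ (Finset.univ.filter (fun i : Fin d => u k i = 1)).card
          + (Finset.univ.filter (fun i : Fin d => u l i = 1)).card :=
        Finset.card_union_le _ _
      _ ≤ ψ + ψ := Nat.add_le_add (hones k) (hones l)
      _ = 2 * ψ := (two_mul ψ).symm
  -- count bound
  have hcount : 4 ^ t * Bad.card ≤ n ^ 2 * N ^ d := by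
    calc 4 ^ t * Bad.card
        ≤ 4 ^ t * ∑ p ∈ (Finset.univ : Finset (Fin n × Fin n)),
            (Finset.univ.filter (fun b : Fin d → Fin N =>
              t ≤ (Finset.univ.filter (fun j : Fin N =>
                2 ≤ (Finset.univ.filter
                  (fun i : Fin d => (u p.1 i = 1 ∨ u p.2 i = 1) ∧ b i = j)).card)).card)).card := by
          apply Nat.mul_le_mul_left
          exact le_trans (Finset.card_le_card hsub) Finset.card_biUnion_le
      _ = ∑ p ∈ (Finset.univ : Finset (Fin n × Fin n)),
            4 ^ t * (Finset.univ.filter (fun b : Fin d → Fin N =>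
              t ≤ (Finset.univ.filter (fun j : Fin N =>
                2 ≤ (Finset.univ.filter
                  (fun i : Fin d => (u p.1 i = 1 ∨ u p.2 i = 1) ∧ b i = j)).card)).card)).card :=
          Finset.mul_sum _ _ _
      _ ≤ ∑ _p ∈ (Finset.univ : Finset (Fin n × Fin n)), N ^ d := by
          apply Finset.sum_le_sum
          intro p _
          exact pair_bound N ψ t hN hψ (fun i => u p.1 i = 1 ∨ u p.2 i = 1) (hcardS p.1 p.2)
      _ = n ^ 2 * N ^ d := by
          rw [Finset.sum_const, smul_eq_mul, Finset.card_univ]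
          simp [sq]
  -- n ^ 3 ≤ 4 ^ t
  have hn3 : n ^ 3 ≤ 4 ^ t := by
    have hnpos : (0:ℝ) < (n:ℝ) := by
      have : (2:ℝ) ≤ (n:ℝ) := by exact_mod_cast hn
      linarith
    have hlt : Real.logb 2 ((n:ℝ) ^ 3) < (t:ℝ) := by
      have h1 : Real.logb 2 ((n:ℝ) ^ 3) = 3 * Real.logb 2 n := by
        rw [Real.logb_pow]; push_cast; ring
      have h2 : ε * r < (t:ℝ) := by
        rw [ht]; push_cast
        exact Nat.lt_floor_add_one _
      linarith
    have h3 : ((n:ℝ)) ^ 3 < (2:ℝ) ^ (t:ℝ) := by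
      have := (Real.rpow_logb (by norm_num : (0:ℝ) < 2) (by norm_num)
        (by positivity : (0:ℝ) < (n:ℝ) ^ 3))
      calc ((n:ℝ)) ^ 3 = (2:ℝ) ^ (Real.logb 2 ((n:ℝ) ^ 3)) := this.symm
        _ < (2:ℝ) ^ (t:ℝ) :=
          Real.rpow_lt_rpow_left_iff (by norm_num : (1:ℝ) < 2) |>.mpr hlt
    have h4 : ((n:ℝ)) ^ 3 < ((2 ^ t : ℕ) : ℝ) := by
      have hc : ((2 ^ t : ℕ) : ℝ) = (2:ℝ) ^ (t:ℝ) := by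
        rw [Real.rpow_natCast]; push_cast; ring
      rw [hc]; exact h3
    have h5 : n ^ 3 < 2 ^ t := by exact_mod_cast h4
    calc n ^ 3 ≤ 2 ^ t := h5.le
      _ ≤ 4 ^ t := Nat.pow_le_pow_left (by norm_num) t
  have hfinal : n * Bad.card ≤ N ^ d := by
    have h1 : n ^ 2 * (n * Bad.card) ≤ n ^ 2 * N ^ d := by
      calc n ^ 2 * (n * Bad.card) = n ^ 3 * Bad.card := by ring
        _ ≤ 4 ^ t * Bad.card := Nat.mul_le_mul_right _ hn3
        _ ≤ n ^ 2 * N ^ d := hcount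
    exact Nat.le_of_mul_le_mul_left h1 (by positivity)
  have hcardUniv : ((Finset.univ : Finset (Fin d → Fin N)).card) = N ^ d := by
    rw [Finset.card_univ]
    simp [Fintype.card_fun]
  rw [hcardUniv, div_le_div_iff₀ (by positivity) (by
      have : (2:ℝ) ≤ (n:ℝ) := by exact_mod_cast hn
      linarith)]
  rw [one_mul]
  calc (Bad.card : ℝ) * n = ((n * Bad.card : ℕ) : ℝ) := by push_cast; ring
    _ ≤ ((N ^ d : ℕ) : ℝ) := by exact_mod_cast hfinal
end

section
/- If a pair of compressed vectors u', v' (obtained from u, v via BCS with bucket map b) shares more than εr corrupted buckets, then at least ⌈εr/2⌉ disjoint pairs of active positions of (u,v) were mapped to common buckets, i.e., there exist ⌈εr/2⌉ pairwise-disjoint pairs {i, i'} of active positions with b(i) = b(i'). -/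
open Finset

/-- If more than `εr` buckets are corrupted, then there exist at least `⌈εr/2⌉` pairwise
disjoint pairs of active positions mapped to common buckets. -/
theorem corrupted_buckets_give_disjoint_collisions {d N : ℕ} (b : Fin d → Fin N)
    (u v : Fin d → ZMod 2) (ε : ℝ) (r : ℕ) (hε : 0 < ε) (hε1 : ε < 1)
    (hcor : (ε * r : ℝ) < ((Finset.univ.filter (fun j : Fin N =>
        2 ≤ (Finset.univ.filter
          (fun i : Fin d => (u i = 1 ∨ v i = 1) ∧ b i = j)).card)).card : ℝ)) :
    ∃ P : Finset (Finset (Fin d)),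
      ⌈ε * r / 2⌉₊ ≤ P.card ∧
      (∀ p ∈ P, p.card = 2 ∧ (∀ i ∈ p, u i = 1 ∨ v i = 1) ∧
        ∀ i ∈ p, ∀ i' ∈ p, b i = b i') ∧
      (P : Set (Finset (Fin d))).Pairwise Disjoint := by
  classical
  set S : Fin N → Finset (Fin d) :=
    fun j => Finset.univ.filter (fun i : Fin d => (u i = 1 ∨ v i = 1) ∧ b i = j) with hS
  set C : Finset (Fin N) := Finset.univ.filter (fun j : Fin N => 2 ≤ (S j).card) with hC
  have hchoose : ∀ j : Fin N, 2 ≤ (S j).card → ∃ t ⊆ S j, t.card = 2 :=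
    fun j h => Finset.exists_subset_card_eq h
  let f : Fin N → Finset (Fin d) := fun j =>
    if h : 2 ≤ (S j).card then (hchoose j h).choose else ∅
  have hf : ∀ j ∈ C, f j ⊆ S j ∧ (f j).card = 2 := by
    intro j hj
    simp only [hC, Finset.mem_filter] at hj
    simp only [f, dif_pos hj.2]
    exact (hchoose j hj.2).choose_spec
  refine ⟨C.image f, ?_, ?_, ?_⟩
  · have hinj : Set.InjOn f C := by
      intro j hj j' hj' hEq
      obtain ⟨hsub, hcard⟩ := hf j hj
      obtain ⟨hsub', _⟩ := hf j' hj'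
      obtain ⟨i, hi⟩ := Finset.card_pos.mp (by omega : 0 < (f j).card)
      have h1 := hsub hi
      have h2 := hsub' (hEq ▸ hi)
      simp only [hS, Finset.mem_filter] at h1 h2
      rw [← h1.2.2, ← h2.2.2]
    rw [Finset.card_image_of_injOn hinj]
    have h1 : (ε * r : ℝ) < (C.card : ℝ) := hcor
    have h2 : ⌈ε * r⌉₊ ≤ C.card := by
      exact_mod_cast Nat.ceil_le.mpr h1.le
    have h3 : ⌈ε * r / 2⌉₊ ≤ ⌈ε * r⌉₊ := by
      apply Nat.ceil_le_ceil
      have : (0:ℝ) ≤ ε * r := by positivity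
      linarith
    omega
  · intro p hp
    obtain ⟨j, hj, rfl⟩ := Finset.mem_image.mp hp
    obtain ⟨hsub, hcard⟩ := hf j hj
    refine ⟨hcard, ?_, ?_⟩
    · intro i hi
      have := hsub hi
      simp only [hS, Finset.mem_filter] at this
      exact this.2.1
    · intro i hi i' hi'
      have h1 := hsub hi
      have h2 := hsub hi'
      simp only [hS, Finset.mem_filter] at h1 h2
      rw [h1.2.2, h2.2.2]
  · intro p hp q hq hne
    simp only [Finset.coe_image, Set.mem_image, Finset.mem_coe] at hp hq
    obtain ⟨j, hj, rfl⟩ := hp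
    obtain ⟨j', hj', rfl⟩ := hq
    obtain ⟨hsub, _⟩ := hf j hj
    obtain ⟨hsub', _⟩ := hf j' hj'
    have hjj : j ≠ j' := fun h => hne (by rw [h])
    rw [Finset.disjoint_left]
    intro i hi hi'
    have h1 := hsub hi
    have h2 := hsub' hi'
    simp only [hS, Finset.mem_filter] at h1 h2
    exact hjj (h1.2.2 ▸ h2.2.2 ▸ rfl)
end
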